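/- The function f : [0,1] → ℝ defined by f(η) = η·(1 − η)³·(η + 3) attains its maximum on [0,1] uniquely at η* = (2/5)·√10 − 1 (≈ 0.2649); i.e., for every η ∈ [0,1] with η ≠ (2/5)·√10 − 1 one has f(η) < f((2/5)·√10 − 1). -/
import Mathlib


/-- The geometry factor `f(η) = η (1 − η)³ (η + 3)` of the leading-order
displacement attains its maximum on `[0, 1]` uniquely at `η* = (2/5)√10 − 1`. -/
theorem optimal_geometry_for_displacement
    (f : ℝ → ℝ) (hf : ∀ η, f η = η * (1 - η) ^ 3 * (η + 3)) :
    ∀ η ∈ Set.Icc (0:ℝ) 1, η ≠ (2 / 5) * Real.sqrt 10 - 1 →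
      f η < f ((2 / 5) * Real.sqrt 10 - 1) := by
  intro η hη hne
  obtain ⟨h0, h1⟩ := hη
  set s : ℝ := Real.sqrt 10 with hs
  have hs2 : s ^ 2 = 10 := Real.sq_sqrt (by norm_num)
  have hs3 : 3 < s := by
    nlinarith [Real.sqrt_nonneg 10, hs2]
  have hs4 : s < 3.2 := by
    nlinarith [Real.sqrt_nonneg 10, hs2]
  set e : ℝ := (2 / 5) * s - 1 with he
  have hkey : f e - f η = (η - e) ^ 2 *
      (η ^ 3 + (-2 + 4 / 5 * s) * η ^ 2 + (9 / 5 - 12 / 5 * s) * η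
        + (-16 / 5 + 64 / 25 * s)) := by
    rw [hf, hf, he]
    linear_combination (-32 / 3125 * s + 16 / 125 - 16 / 125 * η ^ 2) * s * hs2
      + (-96 / 125 * s + 48 / 125 * η * s + 12 / 25 * η ^ 3 - 24 / 25 * η ^ 2
        - 4 / 25 * η + 32 / 25) * hs2
      + (-32 / 3125 * s ^ 3 + 432 / 3125 * s ^ 2 - 16 / 125 * s) * hs2
  have hsq : 0 < (η - e) ^ 2 := by
    have : η - e ≠ 0 := sub_ne_zero.mpr hne
    positivity
  have hq : 0 < η ^ 3 + (-2 + 4 / 5 * s) * η ^ 2 + (9 / 5 - 12 / 5 * s) * η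
      + (-16 / 5 + 64 / 25 * s) := by
    nlinarith [mul_nonneg (sub_nonneg.mpr h1) h0, sq_nonneg (1 - η),
      mul_nonneg (mul_nonneg (sub_nonneg.mpr h1) (sub_nonneg.mpr h1)) h0,
      mul_nonneg (sub_nonneg.mpr h1) (le_of_lt (sub_pos.mpr hs3))]
  nlinarith [mul_pos hsq hq]
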